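/- arXiv:1208.3266 — 5 statements merged into one kernel-verified Lean document; each statement's English description precedes it below -/
import Mathlib

section
/- Let ω = exp(2πi/3) and for a real number a let M(a) be the 4×4 complex Hermitian matrix with zero diagonal, M(a)₀₁ = M(a)₀₂ = M(a)₀₃ = 1, M(a)₁₂ = M(a)₂₃ = M(a)₃₁ = exp(ia), and remaining entries determined by Hermitian symmetry (M(a)ᵢⱼ = conj(M(a)ⱼᵢ)). Then the vector w = (0, 1, ω, ω̄) ∈ ℂ⁴ satisfies M(a) · w = (ω·exp(ia) + ω̄·exp(−ia)) · w; in particular ω·exp(ia) + ω̄·exp(−ia) = 2·cos(a + 2π/3) is an eigenvalue of M(a). -/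
/-!
For a primitive cube root of unity `ω`, the first row of `M(a)` sends `(0, 1, ω, ω²)` to
`1 + ω + ω² = 0`, and on the other rows the cyclic pattern of `z = e^{ia}` and `z̄` acts on
`(1, ω, ω²)` as multiplication by `ωz + ω²z̄`, because `ω³ = 1`. As `|ω| = 1`, `ω̄ = ω²`, so the
eigenvalue is `x + x̄` with `x = ω e^{ia} = e^{i(a + 2π/3)}`, i.e. `2 cos (a + 2π/3)`.
-/

open Complex Matrix

/-- The Gyroid graph Hamiltonian along the diagonal of the 3-torus. -/
noncomputable def gyroidDiag (a : ℝ) : Matrix (Fin 4) (Fin 4) ℂ :=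
  !![0, 1, 1, 1;
     1, 0, Complex.exp (Complex.I * a), Complex.exp (-(Complex.I * a));
     1, Complex.exp (-(Complex.I * a)), 0, Complex.exp (Complex.I * a);
     1, Complex.exp (Complex.I * a), Complex.exp (-(Complex.I * a)), 0]

open ComplexConjugate

def gyroidMatrix {R : Type*} [Zero R] [One R] (z z' : R) : Matrix (Fin 4) (Fin 4) R :=
  !![0, 1, 1, 1;
     1, 0, z, z';
     1, z', 0, z;
     1, z, z', 0]

theorem gyroidDiag_eq_gyroidMatrix (a : ℝ) :
    gyroidDiag a = gyroidMatrix (exp (I * a)) (exp (-(I * a))) :=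
  rfl

theorem gyroidMatrix_mulVec_of_one_add_add_sq_eq_zero {R : Type*} [CommRing R] {ζ : R}
    (hζ : 1 + ζ + ζ ^ 2 = 0) (z z' : R) :
    gyroidMatrix z z' *ᵥ ![0, 1, ζ, ζ ^ 2] = (ζ * z + ζ ^ 2 * z') • ![0, 1, ζ, ζ ^ 2] := by
  have hcube : ζ ^ 3 = 1 := by linear_combination (ζ - 1) * hζ
  ext i
  fin_cases i <;>
    simp only [gyroidMatrix, mulVec, dotProduct, Fin.sum_univ_four, of_apply, Pi.smul_apply,
      smul_eq_mul, Fin.zero_eta, Fin.mk_one, Fin.reduceFinMk, cons_val', cons_val_fin_one, cons_val,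
      cons_val_zero, cons_val_one, Fin.isValue]
  · linear_combination hζ
  · ring
  · linear_combination -z' * hcube
  · linear_combination -(z + ζ * z') * hcube

theorem Complex.conj_eq_sq_of_pow_three_eq_one {ζ : ℂ} (hζ : ζ ^ 3 = 1) :
    conj ζ = ζ ^ 2 := by
  rw [← inv_eq_conj (norm_eq_one_of_pow_eq_one hζ three_ne_zero)]
  exact inv_eq_of_mul_eq_one_right (by rw [← pow_succ']; exact hζ)

theorem Complex.exp_mul_I_mul_exp_add_conj (θ a : ℝ) :
    exp (θ * I) * exp (I * a) + conj (exp (θ * I)) * exp (-(I * a)) =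
      (2 * Real.cos (a + θ) : ℝ) := by
  have hconj : conj (exp (θ * I)) * exp (-(I * a)) = conj (exp (θ * I) * exp (I * a)) := by
    rw [map_mul, ← exp_conj, ← exp_conj]
    simp
  have hangle : exp (θ * I) * exp (I * a) = exp ((a + θ : ℝ) * I) := by
    rw [← exp_add]
    congr 1
    push_cast
    ring
  rw [hconj, add_conj, hangle, exp_ofReal_mul_I_re]

theorem stmt0 (a : ℝ) :
    let ω : ℂ := Complex.exp (2 * Real.pi * Complex.I / 3)
    let w : Fin 4 → ℂ := ![0, 1, ω, starRingEnd ℂ ω]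
    (gyroidDiag a) *ᵥ w =
      (ω * Complex.exp (Complex.I * a) +
        starRingEnd ℂ ω * Complex.exp (-(Complex.I * a))) • w ∧
    ω * Complex.exp (Complex.I * a) +
        starRingEnd ℂ ω * Complex.exp (-(Complex.I * a)) =
      (2 * Real.cos (a + 2 * Real.pi / 3) : ℝ) := by
  intro ω w
  have hprim : IsPrimitiveRoot ω 3 := by
    simpa using isPrimitiveRoot_exp 3 three_ne_zero
  have hsum : 1 + ω + ω ^ 2 = 0 := by
    simpa [Finset.sum_range_succ] using hprim.geom_sum_eq_zero (by norm_num)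
  have hconj : conj ω = ω ^ 2 := conj_eq_sq_of_pow_three_eq_one hprim.pow_eq_one
  have hω : ω = exp ((2 * Real.pi / 3 : ℝ) * I) := by
    change exp _ = _
    congr 1
    push_cast
    ring
  refine ⟨?_, ?_⟩
  · simp only [w, gyroidDiag_eq_gyroidMatrix, hconj]
    exact gyroidMatrix_mulVec_of_one_add_add_sq_eq_zero hsum _ _
  · rw [hω]
    exact exp_mul_I_mul_exp_add_conj _ _
end

section
/- Let M be the 4×4 complex Hermitian matrix with zero diagonal, M₀₁ = M₀₂ = M₀₃ = 1, M₁₂ = M₂₃ = M₃₁ = i, and Hermitian symmetry (so M₂₁ = M₃₂ = M₁₃ = −i). Then M² = 3·I₄. Consequently the eigenvalues of M are ±√3, and since the trace of M is 0, each eigenvalue √3 and −√3 occurs with multiplicity exactly 2. -/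
/-!
Since `M² = 3`, the factorisation `(μ - M)(μ + M) = (μ² - 3)·1` shows that every root `μ`
of the characteristic polynomial satisfies `μ² = 3`. Over `ℂ` the charpoly is `∏ (X - μ)`
over its four roots, each `±√3`, and their sum is `trace M = 0`; so both signs occur exactly
twice.
-/

open Matrix Polynomial Complex

theorem Multiset.eq_replicate_add_replicate_neg {K : Type*} [Field K] [CharZero K]
    {R : Multiset K} {s : K} {k : ℕ} (hs : s ≠ 0) (hR : ∀ x ∈ R, x = s ∨ x = -s)
    (hsum : R.sum = 0) (hcard : R.card = 2 * k) :
    R = replicate k s + replicate k (-s) := by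
  classical
  set a := R.count s
  set b := (R.filter (· ≠ s)).card
  have hsplit : R = replicate a s + replicate b (-s) := by
    conv_lhs => rw [← filter_add_not (· = s) R]
    refine congrArg₂ (· + ·) (filter_eq' R s) (eq_replicate_card.mpr fun x hx => ?_)
    obtain ⟨hxR, hxs⟩ := mem_filter.mp hx
    exact (hR x hxR).resolve_left hxs
  have hab : a = b := by
    rw [hsplit] at hsum
    simp only [sum_add, sum_replicate, nsmul_eq_mul] at hsum
    have h : ((a : K) - b) * s = 0 := by linear_combination hsum
    exact_mod_cast sub_eq_zero.mp ((mul_eq_zero.mp h).resolve_right hs)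
  have hk : a = k := by
    rw [hsplit, card_add, card_replicate, card_replicate] at hcard
    omega
  rw [hsplit, ← hab, hk]

namespace Matrix

variable {K n : Type*} [Field K] [Fintype n] [DecidableEq n]

theorem sq_eq_sq_of_isRoot_charpoly {A : Matrix n n K} {s μ : K} (hA : A * A = s ^ 2 • 1)
    (hμ : A.charpoly.IsRoot μ) : μ ^ 2 = s ^ 2 := by
  have hsing : (scalar n μ - A).det = 0 := by rwa [← eval_charpoly]
  have hfactor :
      (scalar n μ - A) * (scalar n μ + A) = (μ ^ 2 - s ^ 2) • (1 : Matrix n n K) := by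
    simp only [scalar_apply, ← smul_one_eq_diagonal, sub_mul, mul_add, smul_mul_assoc,
      mul_smul_comm, Matrix.one_mul, Matrix.mul_one, hA]
    module
  have hdet := congrArg det hfactor
  rw [det_mul, hsing, zero_mul, det_smul, det_one, mul_one] at hdet
  exact sub_eq_zero.mp (pow_eq_zero_iff'.mp hdet.symm).1

theorem charpoly_eq_of_mul_self_eq_smul_one [IsAlgClosed K] [CharZero K] {A : Matrix n n K}
    {s : K} {k : ℕ} (hs : s ≠ 0) (hA : A * A = s ^ 2 • 1) (htr : A.trace = 0)
    (hn : Fintype.card n = 2 * k) :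
    A.charpoly = (X - C s) ^ k * (X + C s) ^ k := by
  have hroots : A.charpoly.roots = Multiset.replicate k s + Multiset.replicate k (-s) := by
    refine Multiset.eq_replicate_add_replicate_neg hs (fun μ hμ => ?_) ?_ ?_
    · exact sq_eq_sq_iff_eq_or_eq_neg.mp (sq_eq_sq_of_isRoot_charpoly hA (isRoot_of_mem_roots hμ))
    · rw [← trace_eq_sum_roots_charpoly, htr]
    · rw [IsAlgClosed.card_roots_eq_natDegree, charpoly_natDegree_eq_dim, hn]
  rw [← prod_multiset_X_sub_C_of_monic_of_roots_card_eq A.charpoly_monic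
      (IsAlgClosed.card_roots_eq_natDegree), hroots]
  simp [sub_neg_eq_add]

end Matrix

theorem stmt4 :
    let M : Matrix (Fin 4) (Fin 4) ℂ :=
      !![0, 1, 1, 1;
         1, 0, Complex.I, -Complex.I;
         1, -Complex.I, 0, Complex.I;
         1, Complex.I, -Complex.I, 0]
    M * M = (3 : ℂ) • (1 : Matrix (Fin 4) (Fin 4) ℂ) ∧
    M.trace = 0 ∧
    M.charpoly =
      (X - C ((Real.sqrt 3 : ℝ) : ℂ)) ^ 2 * (X + C ((Real.sqrt 3 : ℝ) : ℂ)) ^ 2 := by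
  intro M
  have hsq : M * M = (3 : ℂ) • (1 : Matrix (Fin 4) (Fin 4) ℂ) := by
    ext i j
    fin_cases i <;> fin_cases j <;> simp [M, mul_apply, Fin.sum_univ_four, one_apply] <;> norm_num
  have htr : M.trace = 0 := by simp [M, trace, Fin.sum_univ_four]
  have hsqrt : ((Real.sqrt 3 : ℝ) : ℂ) ^ 2 = 3 := by
    rw [← ofReal_pow, Real.sq_sqrt (by norm_num)]; norm_num
  refine ⟨hsq, htr, charpoly_eq_of_mul_self_eq_smul_one ?_ (hsq.trans (by rw [hsqrt])) htr rfl⟩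
  exact ofReal_ne_zero.mpr (Real.sqrt_ne_zero'.mpr (by norm_num))
end

section
/- On the torus T³ = (ℝ/2πℤ)³ define the three maps σ₁(a,b,c) = (−a, −b, a+b+c), σ₂(a,b,c) = (−a, −c, −b), σ₃(a,b,c) = (−b, −a, −c). Then σ₁, σ₂, σ₃ satisfy the Coxeter relations of the symmetric group S₄: σᵢ² = id for i = 1,2,3, (σ₁∘σ₂)³ = id, (σ₂∘σ₃)³ = id, and (σ₁∘σ₃)² = id. Consequently there is a group homomorphism from S₄ to the group of self-bijections of T³ sending the adjacent transpositions (12), (23), (34) to σ₁, σ₂, σ₃ respectively. -/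
/-- The momentum torus `T³ = (ℝ/2πℤ)³` of the Gyroid wire network. -/
abbrev GyroidTorus : Type :=
  AddCircle (2 * Real.pi) × AddCircle (2 * Real.pi) × AddCircle (2 * Real.pi)

/-- Lift of the re-gauging induced by the transposition (12). -/
noncomputable def sigma1 : GyroidTorus → GyroidTorus := fun t => (-t.1, -t.2.1, t.1 + t.2.1 + t.2.2)

/-- Lift of the re-gauging induced by the transposition (23). -/
noncomputable def sigma2 : GyroidTorus → GyroidTorus := fun t => (-t.1, -t.2.2, -t.2.1)

/-- Lift of the re-gauging induced by the transposition (34). -/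
noncomputable def sigma3 : GyroidTorus → GyroidTorus := fun t => (-t.2.1, -t.1, -t.2.2)

/-! `S₄` acts on the zero-sum vectors of `A⁴`, for any abelian group `A`, by signed permutations
`π • v = sign π • (v ∘ π⁻¹)`: the sign character makes this an action, and it preserves the
zero-sum condition since it multiplies the sum by `sign π`. The map `(a, b, c) ↦ (-(a + b + c), c, b, a)`
identifies `T³` with the zero-sum vectors of `(ℝ/2πℤ)⁴`, and under it the adjacent transpositions act
as `σ₁, σ₂, σ₃`. The Coxeter relations then hold in `T³` because they hold in `S₄`. -/

open Equiv

section SignedPerm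

variable {ι A : Type*} [Fintype ι] [DecidableEq ι] [AddCommGroup A]

def signedPerm (π : Perm ι) (v : ι → A) : ι → A := fun i => Perm.sign π • v (π⁻¹ i)

theorem signedPerm_one (v : ι → A) : signedPerm 1 v = v := by
  funext i; simp [signedPerm]

theorem signedPerm_mul (π τ : Perm ι) (v : ι → A) :
    signedPerm (π * τ) v = signedPerm π (signedPerm τ v) := by
  funext i; simp [signedPerm, mul_smul]

theorem sum_signedPerm (π : Perm ι) (v : ι → A) :
    ∑ i, signedPerm π v i = Perm.sign π • ∑ i, v i := by
  rw [Finset.smul_sum, ← Equiv.sum_comp π]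
  simp [signedPerm]

theorem signedPerm_swap {i j : ι} (h : i ≠ j) (v : ι → A) :
    signedPerm (swap i j) v = -(v ∘ swap i j) := by
  funext k; simp [signedPerm, Perm.sign_swap h]

variable (ι A) in
def ZeroSum : Type _ := {v : ι → A // ∑ i, v i = 0}

instance : MulAction (Perm ι) (ZeroSum ι A) where
  smul π v := ⟨signedPerm π v.1, by rw [sum_signedPerm, v.2, smul_zero]⟩
  one_smul v := Subtype.ext (signedPerm_one v.1)
  mul_smul π τ v := Subtype.ext (signedPerm_mul π τ v.1)

theorem ZeroSum.coe_smul (π : Perm ι) (v : ZeroSum ι A) : (π • v).1 = signedPerm π v.1 := rfl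

end SignedPerm

/-- The reversed order of the coordinates makes the transpositions `(12)`, `(23)`, `(34)` act as
`sigma1`, `sigma2`, `sigma3`. -/
noncomputable def gyroidTorusEquivZeroSum :
    GyroidTorus ≃ ZeroSum (Fin 4) (AddCircle (2 * Real.pi)) where
  toFun t := ⟨![-(t.1 + t.2.1 + t.2.2), t.2.2, t.2.1, t.1], by simp [Fin.sum_univ_four]⟩
  invFun v := (v.1 3, v.1 2, v.1 1)
  left_inv _ := rfl
  right_inv := fun ⟨v, hv⟩ => by
    rw [Fin.sum_univ_four] at hv
    refine Subtype.ext (funext fun i => ?_)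
    fin_cases i
    · change -(v 3 + v 2 + v 1) = v 0
      rw [neg_eq_iff_add_eq_zero, ← hv]
      abel
    all_goals rfl

theorem coe_gyroidTorusEquivZeroSum (t : GyroidTorus) :
    (gyroidTorusEquivZeroSum t).1 = ![-(t.1 + t.2.1 + t.2.2), t.2.2, t.2.1, t.1] := rfl

theorem gyroidTorusEquivZeroSum_symm_apply (v : ZeroSum (Fin 4) (AddCircle (2 * Real.pi))) :
    gyroidTorusEquivZeroSum.symm v = (v.1 3, v.1 2, v.1 1) := rfl

noncomputable def gyroidPermHom : Perm (Fin 4) →* Perm GyroidTorus :=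
  letI := gyroidTorusEquivZeroSum.mulAction (Perm (Fin 4))
  MulAction.toPermHom _ _

theorem gyroidPermHom_apply (π : Perm (Fin 4)) (t : GyroidTorus) :
    gyroidPermHom π t = gyroidTorusEquivZeroSum.symm (π • gyroidTorusEquivZeroSum t) := rfl

theorem gyroidPermHom_swap_apply {i j : Fin 4} (h : i ≠ j) (t : GyroidTorus) :
    gyroidPermHom (swap i j) t =
      (-(gyroidTorusEquivZeroSum t).1 (swap i j 3), -(gyroidTorusEquivZeroSum t).1 (swap i j 2),
        -(gyroidTorusEquivZeroSum t).1 (swap i j 1)) := by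
  rw [gyroidPermHom_apply, gyroidTorusEquivZeroSum_symm_apply, ZeroSum.coe_smul, signedPerm_swap h]
  rfl

theorem coe_gyroidPermHom_swap_zero_one : ⇑(gyroidPermHom (swap 0 1)) = sigma1 := by
  funext t
  simp [gyroidPermHom_swap_apply, coe_gyroidTorusEquivZeroSum, swap_apply_def, sigma1]

theorem coe_gyroidPermHom_swap_one_two : ⇑(gyroidPermHom (swap 1 2)) = sigma2 := by
  funext t
  simp [gyroidPermHom_swap_apply, coe_gyroidTorusEquivZeroSum, swap_apply_def, sigma2]

theorem coe_gyroidPermHom_swap_two_three : ⇑(gyroidPermHom (swap 2 3)) = sigma3 := by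
  funext t
  simp [gyroidPermHom_swap_apply, coe_gyroidTorusEquivZeroSum, swap_apply_def, sigma3]

theorem stmt10 :
    (sigma1 ∘ sigma1 = id) ∧ (sigma2 ∘ sigma2 = id) ∧ (sigma3 ∘ sigma3 = id) ∧
    ((sigma1 ∘ sigma2) ∘ (sigma1 ∘ sigma2) ∘ (sigma1 ∘ sigma2) = id) ∧
    ((sigma2 ∘ sigma3) ∘ (sigma2 ∘ sigma3) ∘ (sigma2 ∘ sigma3) = id) ∧
    ((sigma1 ∘ sigma3) ∘ (sigma1 ∘ sigma3) = id) ∧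
    ∃ φ : Equiv.Perm (Fin 4) →* Equiv.Perm GyroidTorus,
      ⇑(φ (Equiv.swap 0 1)) = sigma1 ∧
      ⇑(φ (Equiv.swap 1 2)) = sigma2 ∧
      ⇑(φ (Equiv.swap 2 3)) = sigma3 := by
  have comp_eq (a b : Perm (Fin 4)) :
      ⇑(gyroidPermHom a) ∘ ⇑(gyroidPermHom b) = ⇑(gyroidPermHom (a * b)) := by
    rw [map_mul, Perm.coe_mul]
  have relation {w : Perm (Fin 4)} (hw : w = 1) : ⇑(gyroidPermHom w) = id := by
    rw [hw, map_one, Perm.coe_one]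
  refine ⟨?_, ?_, ?_, ?_, ?_, ?_, gyroidPermHom, coe_gyroidPermHom_swap_zero_one,
    coe_gyroidPermHom_swap_one_two, coe_gyroidPermHom_swap_two_three⟩ <;>
  · simp only [← coe_gyroidPermHom_swap_zero_one, ← coe_gyroidPermHom_swap_one_two,
      ← coe_gyroidPermHom_swap_two_three, comp_eq]
    exact relation (by decide)
end

section
/- On T³ = (ℝ/2πℤ)³ consider the two maps c(a,b,c) = (b,c,a) and d(a,b,c) = (a, c, −a−b−c). A point t ∈ T³ is fixed by both c and d if and only if t = (x,x,x) with 4x = 0 in ℝ/2πℤ; i.e., the common fixed-point set is exactly the four points (0,0,0), (π/2,π/2,π/2), (π,π,π), (3π/2,3π/2,3π/2). -/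
/-- Lift of the re-gauging induced by the 3-cycle (234): cyclic permutation. -/
noncomputable def cMap : GyroidTorus → GyroidTorus := fun t => (t.2.1, t.2.2, t.1)

/-- Lift of the re-gauging induced by another 3-cycle of the Gyroid graph. -/
noncomputable def dMap : GyroidTorus → GyroidTorus := fun t => (t.1, t.2.2, -t.1 - t.2.1 - t.2.2)

/-- The diagonal point `(x,x,x)` of the torus for `x : ℝ`. -/
noncomputable def diagPt (x : ℝ) : GyroidTorus :=
  ((x : AddCircle (2 * Real.pi)), (x : AddCircle (2 * Real.pi)), (x : AddCircle (2 * Real.pi)))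

/-! Only the group structure of each coordinate matters: `c` fixes exactly the diagonal, and on
the diagonal `d` sends `(x,x,x)` to `(x,x,-3x)`, so the common fixed points are the diagonal
points with `4x = 0`. On `ℝ/2πℤ` this 4-torsion consists of the multiples of `π/2`. -/

theorem Prod.cycle_and_shear_fixed_iff {G : Type*} [AddCommGroup G] (a b c : G) :
    ((b, c, a) = (a, b, c) ∧ (a, c, -a - b - c) = (a, b, c)) ↔
      ∃ x : G, (a, b, c) = (x, x, x) ∧ (4 : ℤ) • x = 0 := by
  have diag_shear_iff (x : G) : -x - x - x = x ↔ (4 : ℤ) • x = 0 := by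
    rw [show (4 : ℤ) • x = x - (-x - x - x) by abel, sub_eq_zero, eq_comm]
  simp only [Prod.mk.injEq, ← diag_shear_iff]
  constructor
  · rintro ⟨⟨hba, hcb, -⟩, -, -, h⟩
    subst b c
    exact ⟨a, ⟨rfl, rfl, rfl⟩, h⟩
  · rintro ⟨x, ⟨rfl, rfl, rfl⟩, h⟩
    exact ⟨⟨rfl, rfl, rfl⟩, trivial, rfl, h⟩

theorem AddCircle.four_zsmul_eq_zero_iff {𝕜 : Type*} [Field 𝕜] [LinearOrder 𝕜]
    [IsStrictOrderedRing 𝕜] {p : 𝕜} [Fact (0 < p)] (x : AddCircle p) :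
    (4 : ℤ) • x = 0 ↔
      x = ((0 : 𝕜) : AddCircle p) ∨ x = ((p / 4 : 𝕜) : AddCircle p) ∨
        x = ((p / 2 : 𝕜) : AddCircle p) ∨ x = ((3 * p / 4 : 𝕜) : AddCircle p) := by
  rw [show (4 : ℤ) • x = (4 : ℕ) • x from natCast_zsmul x 4,
    AddCircle.nsmul_eq_zero_iff (by norm_num)]
  constructor
  · rintro ⟨m, hm, rfl⟩
    interval_cases m <;> [left; (right; left); (right; right; left); (right; right; right)] <;>
      (congr 1; push_cast; ring)
  · rintro (rfl | rfl | rfl | rfl)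
    exacts [⟨0, by norm_num, by norm_num⟩, ⟨1, by norm_num, by congr 1; ring⟩,
      ⟨2, by norm_num, by congr 1; ring⟩, ⟨3, by norm_num, by congr 1; ring⟩]

theorem stmt12 (t : GyroidTorus) :
    ((cMap t = t ∧ dMap t = t) ↔
      ∃ x : AddCircle (2 * Real.pi), t = (x, x, x) ∧ (4 : ℤ) • x = 0) ∧
    ((cMap t = t ∧ dMap t = t) ↔
      t = diagPt 0 ∨ t = diagPt (Real.pi / 2) ∨ t = diagPt Real.pi ∨
        t = diagPt (3 * Real.pi / 2)) := by
  have fixed_iff : (cMap t = t ∧ dMap t = t) ↔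
      ∃ x : AddCircle (2 * Real.pi), t = (x, x, x) ∧ (4 : ℤ) • x = 0 :=
    Prod.cycle_and_shear_fixed_iff t.1 t.2.1 t.2.2
  refine ⟨fixed_iff, fixed_iff.trans ?_⟩
  have : Fact (0 < 2 * Real.pi) := ⟨Real.two_pi_pos⟩
  simp only [AddCircle.four_zsmul_eq_zero_iff, and_or_left, exists_or, exists_eq_right, diagPt]
  rw [show 2 * Real.pi / 4 = Real.pi / 2 by ring, show 2 * Real.pi / 2 = Real.pi by ring,
    show 3 * (2 * Real.pi) / 4 = 3 * Real.pi / 2 by ring]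
end

section
/- Let a, b, c be complex numbers of modulus 1. Then 1 + a + b + c = 0 if and only if (a = −1 and b = −c) or (b = −1 and a = −c) or (c = −1 and a = −b). -/
/-! Conjugating `1 + a + b + c = 0` and using `conj z = z⁻¹` on the unit circle gives
`1 + a⁻¹ + b⁻¹ + c⁻¹ = 0`, i.e. `ab + bc + ca + abc = 0`. Adding the two relations yields
`(1 + a)(1 + b)(1 + c) = 0`, so one of `a, b, c` is `-1` and the other two cancel. -/

open ComplexConjugate

theorem one_add_mul_one_add_mul_one_add_eq_zero_of_inv {K : Type*} [Field K] {a b c : K}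
    (ha : a ≠ 0) (hb : b ≠ 0) (hc : c ≠ 0) (h : 1 + a + b + c = 0)
    (h_inv : 1 + a⁻¹ + b⁻¹ + c⁻¹ = 0) : (1 + a) * (1 + b) * (1 + c) = 0 := by
  have h_sym : a * b * c + b * c + a * c + a * b = 0 := by
    field_simp at h_inv
    linear_combination h_inv
  linear_combination h + h_sym

theorem RCLike.one_add_mul_one_add_mul_one_add_eq_zero {𝕜 : Type*} [RCLike 𝕜] {a b c : 𝕜}
    (ha : ‖a‖ = 1) (hb : ‖b‖ = 1) (hc : ‖c‖ = 1) (h : 1 + a + b + c = 0) :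
    (1 + a) * (1 + b) * (1 + c) = 0 := by
  have ne_zero {z : 𝕜} (hz : ‖z‖ = 1) : z ≠ 0 := norm_ne_zero_iff.mp (by rw [hz]; exact one_ne_zero)
  refine one_add_mul_one_add_mul_one_add_eq_zero_of_inv (ne_zero ha) (ne_zero hb) (ne_zero hc) h ?_
  rw [RCLike.inv_eq_conj ha, RCLike.inv_eq_conj hb, RCLike.inv_eq_conj hc]
  simpa using congrArg conj h

theorem one_add_add_add_eq_zero_and_mul_eq_zero_iff {R : Type*} [CommRing R] [NoZeroDivisors R]
    {a b c : R} :
    1 + a + b + c = 0 ∧ (1 + a) * (1 + b) * (1 + c) = 0 ↔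
      (a = -1 ∧ b = -c) ∨ (b = -1 ∧ a = -c) ∨ (c = -1 ∧ a = -b) := by
  constructor
  · rintro ⟨h, hprod⟩
    rcases mul_eq_zero.mp hprod with hab | hc
    · rcases mul_eq_zero.mp hab with ha | hb
      · exact .inl ⟨by linear_combination ha, by linear_combination h - ha⟩
      · exact .inr (.inl ⟨by linear_combination hb, by linear_combination h - hb⟩)
    · exact .inr (.inr ⟨by linear_combination hc, by linear_combination h - hc⟩)
  · rintro (⟨rfl, rfl⟩ | ⟨rfl, rfl⟩ | ⟨rfl, rfl⟩) <;> constructor <;> ring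

theorem stmt13 (a b c : ℂ) (ha : ‖a‖ = 1) (hb : ‖b‖ = 1)
    (hc : ‖c‖ = 1) :
    1 + a + b + c = 0 ↔
      (a = -1 ∧ b = -c) ∨ (b = -1 ∧ a = -c) ∨ (c = -1 ∧ a = -b) := by
  rw [← one_add_add_add_eq_zero_and_mul_eq_zero_iff]
  exact ⟨fun h => ⟨h, RCLike.one_add_mul_one_add_mul_one_add_eq_zero ha hb hc h⟩, And.left⟩
end
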